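/- Assume the MFS setup with eigenvalue bounds (H_s) and boundary-data decay |v̂(m)| ≤ C_v·ρ^{−|m|} for all m ∈ ℤ with ρ > 1. Let α̂ ∈ ℂ^N be the window-interpolating coefficients α̂_m := (2π/N)·v̂(m)/ŝ(m) for −N/2 < m ≤ N/2. Then there exists a constant C > 0, depending on c_s, C_s, C_v, R, ρ, ŝ(0), v̂(0) but not on N, such that the aliasing error E_u² := ∑_{m∉(−N/2,N/2]} |(N/(2π))·ŝ(m)·α̂_{⟨m⟩_N}|² satisfies E_u² ≤ C·R^{−2N}·∑_{−N/2<n≤N/2} (R²/ρ)^{2|n|}. -/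

import Mathlib

open scoped BigOperators ENNReal NNReal

noncomputable section

/-- The unique representative of `m` modulo `N` lying in the window `(-N/2, N/2]`. -/
def winRep (N : ℕ) (m : ℤ) : ℤ := (m + (N : ℤ) / 2 - 1) % (N : ℤ) - ((N : ℤ) / 2 - 1)

/-- The index window `(-N/2, N/2]` as a finite set of integers. -/
def window (N : ℕ) : Finset ℤ := Finset.Icc (-(N : ℤ) / 2 + 1) ((N : ℤ) / 2)

/-- The norm `|α̂|` of a coefficient vector indexed by the window. -/
def coefNorm (N : ℕ) (a : ℤ → ℂ) : ℝ := Real.sqrt (∑ k ∈ window N, ‖a k‖ ^ 2)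

/-- The boundary error norm
`t(α̂) = (2π·∑_{m∈ℤ} |(N/(2π))·ŝ(m)·α̂_{⟨m⟩_N} − v̂(m)|²)^{1/2}`, valued in `[0,∞]`. -/
def tErr (N : ℕ) (s v a : ℤ → ℂ) : ℝ≥0∞ :=
  (ENNReal.ofReal (2 * Real.pi) *
    ∑' m : ℤ, (‖((N : ℂ) / (2 * (Real.pi : ℂ))) * s m * a (winRep N m) - v m‖₊ : ℝ≥0∞) ^ 2)
    ^ (1 / 2 : ℝ)


/-!
Every `m` outside the window is `k + j * N` with `k = ⟨m⟩_N` in the window and `j ≠ 0`, and the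
aliased coefficient is `ŝ(m) v̂(k) / ŝ(k)`. The eigenvalue bounds give
`|ŝ(m)| / |ŝ(k)| ≲ (max(|k|, 1) / |m|) R^{|k| - |m|} ≤ R^{|k| - |m|}`, and `|m| ≥ |j| N - |k|`,
so the coefficient is `≲ (R² / ρ)^{|k|} R^{-|j| N}`. Summing its square over `j ≠ 0` is a
geometric series `≤ 2 R^{-2N} / (1 - R^{-2N}) ≤ 2 R^{-2N} / (1 - R^{-2})`.
-/

lemma tsum_ne_zero_pow_natAbs_le (q : ℝ≥0∞) :
    ∑' j : {j : ℤ // j ≠ 0}, q ^ j.1.natAbs ≤ 2 * (q * (1 - q)⁻¹) := by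
  have hinj : Function.Injective
      fun j : {j : ℤ // j ≠ 0} => (decide (0 < j.1), j.1.natAbs - 1) := by
    intro j j' h
    simp only [Prod.mk.injEq, decide_eq_decide] at h
    have := j.2
    have := j'.2
    ext
    omega
  calc ∑' j : {j : ℤ // j ≠ 0}, q ^ j.1.natAbs
      = ∑' j : {j : ℤ // j ≠ 0}, q ^ ((j.1.natAbs - 1) + 1) := by
        refine tsum_congr fun j => ?_
        rw [Nat.sub_add_cancel (Int.natAbs_pos.2 j.2)]
    _ ≤ ∑' p : Bool × ℕ, q ^ (p.2 + 1) :=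
        ENNReal.tsum_comp_le_tsum_of_injective hinj fun p => q ^ (p.2 + 1)
    _ = 2 * (q * (1 - q)⁻¹) := by
        rw [ENNReal.tsum_prod', tsum_bool, ENNReal.tsum_geometric_add_one, two_mul]

section Window

variable {N : ℕ}

lemma mem_window_iff {m : ℤ} : m ∈ window N ↔ -(N : ℤ) / 2 + 1 ≤ m ∧ m ≤ (N : ℤ) / 2 :=
  Finset.mem_Icc

lemma winRep_add_mul (m j : ℤ) : winRep N (m + j * N) = winRep N m := by
  rw [winRep, winRep, add_right_comm, add_sub_right_comm, Int.add_mul_emod_self_right]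

lemma dvd_sub_winRep (m : ℤ) : (N : ℤ) ∣ m - winRep N m :=
  ⟨(m + (N : ℤ) / 2 - 1) / N, by have := Int.emod_def (m + (N : ℤ) / 2 - 1) N; rw [winRep]; omega⟩

lemma winRep_mem_window (hN : Even N) (hN0 : 0 < N) (m : ℤ) : winRep N m ∈ window N := by
  obtain ⟨n, rfl⟩ := hN
  have h0 := Int.emod_nonneg (m + ((n + n : ℕ) : ℤ) / 2 - 1) (by omega : ((n + n : ℕ) : ℤ) ≠ 0)
  have h1 := Int.emod_lt_of_pos (m + ((n + n : ℕ) : ℤ) / 2 - 1) (by omega : (0 : ℤ) < (n + n : ℕ))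
  rw [mem_window_iff, winRep]
  omega

lemma winRep_eq_self (hN : Even N) {m : ℤ} (hm : m ∈ window N) : winRep N m = m := by
  obtain ⟨n, rfl⟩ := hN
  rw [mem_window_iff] at hm
  rw [winRep, Int.emod_eq_of_lt (by omega) (by omega)]
  omega

lemma two_mul_abs_le_of_mem_window {k : ℤ} (hk : k ∈ window N) : 2 * |k| ≤ N := by
  rw [mem_window_iff] at hk
  rw [abs_eq_max_neg]
  omega

lemma sub_winRep_div_ne_zero (hN : Even N) (hN0 : 0 < N) {m : ℤ} (hm : m ∉ window N) :
    (m - winRep N m) / N ≠ 0 := by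
  intro h
  have := Int.ediv_mul_cancel (dvd_sub_winRep (N := N) m)
  rw [h, zero_mul, eq_comm, sub_eq_zero] at this
  exact hm (this ▸ winRep_mem_window hN hN0 m)

def windowSplit (hN : Even N) (hN0 : 0 < N) (m : {m : ℤ // m ∉ window N}) :
    window N × {j : ℤ // j ≠ 0} :=
  (⟨winRep N m, winRep_mem_window hN hN0 m⟩,
    ⟨(m - winRep N m) / N, sub_winRep_div_ne_zero hN hN0 m.2⟩)

lemma windowSplit_spec (hN : Even N) (hN0 : 0 < N) (m : {m : ℤ // m ∉ window N}) :
    (m : ℤ) = (windowSplit hN hN0 m).1 + (windowSplit hN hN0 m).2 * N := by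
  simp only [windowSplit, Int.ediv_mul_cancel (dvd_sub_winRep _)]
  ring

lemma windowSplit_injective (hN : Even N) (hN0 : 0 < N) :
    Function.Injective (windowSplit hN hN0) := fun m m' h => by
  rw [Subtype.ext_iff, windowSplit_spec hN hN0 m, windowSplit_spec hN hN0 m', h]

lemma tsum_compl_window_le (hN : Even N) (hN0 : 0 < N) (f c : ℤ → ℝ≥0∞) (q : ℝ≥0∞)
    (hf : ∀ k ∈ window N, ∀ j ≠ 0, f (k + j * N) ≤ c k * q ^ j.natAbs) :
    ∑' m : {m : ℤ // m ∉ window N}, f m ≤ (∑ k ∈ window N, c k) * (2 * (q * (1 - q)⁻¹)) :=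
  calc ∑' m : {m : ℤ // m ∉ window N}, f m
      ≤ ∑' m : {m : ℤ // m ∉ window N},
          c (windowSplit hN hN0 m).1 * q ^ (windowSplit hN hN0 m).2.1.natAbs :=
        ENNReal.tsum_le_tsum fun m => windowSplit_spec hN hN0 m ▸
          hf _ (windowSplit hN hN0 m).1.2 _ (windowSplit hN hN0 m).2.2
    _ ≤ ∑' p : window N × {j : ℤ // j ≠ 0}, c p.1 * q ^ p.2.1.natAbs :=
        ENNReal.tsum_comp_le_tsum_of_injective (windowSplit_injective hN hN0)
          fun p => c p.1 * q ^ p.2.1.natAbs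
    _ = (∑ k ∈ window N, c k) * ∑' j : {j : ℤ // j ≠ 0}, q ^ j.1.natAbs := by
        rw [ENNReal.tsum_prod', ← Finset.tsum_subtype, ← ENNReal.tsum_mul_right]
        simp only [ENNReal.tsum_mul_left]
    _ ≤ (∑ k ∈ window N, c k) * (2 * (q * (1 - q)⁻¹)) := by
        gcongr
        exact tsum_ne_zero_pow_natAbs_le q

end Window

section Eigenvalues

variable {R ρ cs Cs Cv : ℝ} {s v : ℤ → ℂ}

lemma min_div_mul_le_norm (hR : 0 < R)
    (hsl : ∀ m : ℤ, m ≠ 0 → cs / |(m : ℝ)| * R ^ (-|m|) ≤ ‖s m‖) (k : ℤ) :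
    min cs ‖s 0‖ / max |(k : ℝ)| 1 * R ^ (-|k|) ≤ ‖s k‖ := by
  rcases eq_or_ne k 0 with rfl | hk
  · simp
  · have hk1 : (1 : ℝ) ≤ |(k : ℝ)| := by exact_mod_cast Int.one_le_abs hk
    rw [max_eq_left hk1]
    exact le_trans (by gcongr; exact min_le_left _ _) (hsl k hk)

lemma norm_mul_norm_div_norm_le (hR : 0 < R) (hρ : 0 < ρ) (hcs : 0 < cs) (hCs : 0 ≤ Cs)
    (hCv : 0 ≤ Cv) (hs0 : s 0 ≠ 0)
    (hsl : ∀ m : ℤ, m ≠ 0 → cs / |(m : ℝ)| * R ^ (-|m|) ≤ ‖s m‖)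
    (hsu : ∀ m : ℤ, m ≠ 0 → ‖s m‖ ≤ Cs / |(m : ℝ)| * R ^ (-|m|))
    (hv : ∀ m : ℤ, ‖v m‖ ≤ Cv * ρ ^ (-|m|)) {k m : ℤ} (hm : m ≠ 0) (hkm : |k| ≤ |m|) :
    ‖s m‖ * ‖v k‖ / ‖s k‖ ≤ Cs * Cv / min cs ‖s 0‖ * R ^ (|k| - |m|) * ρ ^ (-|k|) := by
  set b := min cs ‖s 0‖
  have hb : 0 < b := lt_min hcs (norm_pos_iff.2 hs0)
  have hkm' : max |(k : ℝ)| 1 ≤ |(m : ℝ)| :=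
    max_le (by exact_mod_cast hkm) (by exact_mod_cast Int.one_le_abs hm)
  calc ‖s m‖ * ‖v k‖ / ‖s k‖
      ≤ Cs / |(m : ℝ)| * R ^ (-|m|) * (Cv * ρ ^ (-|k|)) /
          (b / max |(k : ℝ)| 1 * R ^ (-|k|)) := by
        gcongr
        exacts [hsu m hm, hv k, min_div_mul_le_norm hR hsl k]
    _ = Cs * Cv / b * (max |(k : ℝ)| 1 / |(m : ℝ)|) * R ^ (|k| - |m|) * ρ ^ (-|k|) := by
        rw [zpow_sub₀ hR.ne', zpow_neg R |m|, zpow_neg R |k|]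
        field_simp
    _ ≤ Cs * Cv / b * R ^ (|k| - |m|) * ρ ^ (-|k|) := by
        grw [div_le_one_of_le₀ hkm' (abs_nonneg _), mul_one]

lemma sq_norm_alias_le (hR : 1 < R) (hρ : 0 < ρ) (hcs : 0 < cs)
    (hCs : 0 ≤ Cs) (hCv : 0 ≤ Cv) (hs0 : s 0 ≠ 0)
    (hsl : ∀ m : ℤ, m ≠ 0 → cs / |(m : ℝ)| * R ^ (-|m|) ≤ ‖s m‖)
    (hsu : ∀ m : ℤ, m ≠ 0 → ‖s m‖ ≤ Cs / |(m : ℝ)| * R ^ (-|m|))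
    (hv : ∀ m : ℤ, ‖v m‖ ≤ Cv * ρ ^ (-|m|)) {N : ℕ} (hN0 : 0 < N) {k j : ℤ}
    (hk : 2 * |k| ≤ N) (hj : j ≠ 0) :
    (‖s (k + j * N)‖ * ‖v k‖ / ‖s k‖) ^ 2
      ≤ (Cs * Cv / min cs ‖s 0‖) ^ 2 * (R ^ 2 / ρ) ^ (2 * |k|) *
          (R ^ (-2 * (N : ℤ))) ^ j.natAbs := by
  set m := k + j * N
  have hjN : |j| * N ≤ |m| + |k| := by
    have := abs_sub m k
    rwa [show m - k = j * N by ring, abs_mul, Nat.abs_cast] at this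
  have hNj : (N : ℤ) ≤ |j| * N := le_mul_of_one_le_left (by positivity) (Int.one_le_abs hj)
  have hk0 := abs_nonneg k
  have hm : m ≠ 0 := abs_pos.mp (by omega)
  calc (‖s m‖ * ‖v k‖ / ‖s k‖) ^ 2
      ≤ (Cs * Cv / min cs ‖s 0‖ * R ^ (2 * |k| - |j| * N) * ρ ^ (-|k|)) ^ 2 := by
        gcongr
        refine (norm_mul_norm_div_norm_le (by positivity) hρ hcs hCs hCv hs0 hsl hsu hv hm
          (by omega)).trans ?_
        gcongr _ * R ^ ?_ * _
        exacts [hR.le, by omega]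
    _ = (Cs * Cv / min cs ‖s 0‖) ^ 2 * (R ^ 2 / ρ) ^ (2 * |k|) *
          (R ^ (-2 * (N : ℤ))) ^ j.natAbs := by
        rw [← zpow_natCast (R ^ _), Int.natCast_natAbs, ← zpow_mul, div_zpow, ← zpow_natCast R 2,
          ← zpow_mul, zpow_sub₀ (by positivity), zpow_neg ρ, neg_mul, neg_mul, zpow_neg]
        ring_nf
        simp only [zpow_mul, zpow_ofNat]
        field_simp

def aliasingTerm (N : ℕ) (s v : ℤ → ℂ) (m : ℤ) : ℝ≥0∞ :=
  (‖((N : ℂ) / (2 * (Real.pi : ℂ))) * s m *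
      ((2 * (Real.pi : ℂ)) / (N : ℂ) * v (winRep N m) / s (winRep N m))‖₊ : ℝ≥0∞) ^ 2

lemma aliasingTerm_add_mul_le (hR : 1 < R) (hρ : 0 < ρ)
    (hcs : 0 < cs) (hCs : 0 ≤ Cs) (hCv : 0 ≤ Cv) (hs0 : s 0 ≠ 0)
    (hsl : ∀ m : ℤ, m ≠ 0 → cs / |(m : ℝ)| * R ^ (-|m|) ≤ ‖s m‖)
    (hsu : ∀ m : ℤ, m ≠ 0 → ‖s m‖ ≤ Cs / |(m : ℝ)| * R ^ (-|m|))
    (hv : ∀ m : ℤ, ‖v m‖ ≤ Cv * ρ ^ (-|m|)) {N : ℕ} (hN : Even N) (hN0 : 0 < N) {k j : ℤ}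
    (hk : k ∈ window N) (hj : j ≠ 0) :
    aliasingTerm N s v (k + j * N)
      ≤ ENNReal.ofReal ((Cs * Cv / min cs ‖s 0‖) ^ 2 * (R ^ 2 / ρ) ^ (2 * |k|)) *
          ENNReal.ofReal (R ^ (-2 * (N : ℤ))) ^ j.natAbs := by
  have hN' : (N : ℂ) ≠ 0 := by exact_mod_cast hN0.ne'
  have hcancel : ((N : ℂ) / (2 * (Real.pi : ℂ))) * s (k + j * N) *
      ((2 * (Real.pi : ℂ)) / (N : ℂ) * v k / s k) = s (k + j * N) * v k / s k := by
    field_simp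
  rw [aliasingTerm, winRep_add_mul, winRep_eq_self hN hk, hcancel, ← ENNReal.ofReal_coe_nnreal,
    coe_nnnorm, ← ENNReal.ofReal_pow (norm_nonneg _), ← ENNReal.ofReal_pow (by positivity),
    ← ENNReal.ofReal_mul (by positivity), norm_div, norm_mul]
  exact ENNReal.ofReal_le_ofReal
    (sq_norm_alias_le hR hρ hcs hCs hCv hs0 hsl hsu hv hN0 (two_mul_abs_le_of_mem_window hk) hj)

end Eigenvalues

lemma ofReal_mul_inv_one_sub_ofReal {r : ℝ} (hr0 : 0 ≤ r) (hr1 : r < 1) :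
    ENNReal.ofReal r * (1 - ENNReal.ofReal r)⁻¹ = ENNReal.ofReal (r / (1 - r)) := by
  rw [← ENNReal.ofReal_one, ← ENNReal.ofReal_sub _ hr0, ← ENNReal.ofReal_inv_of_pos (by linarith),
    ← ENNReal.ofReal_mul hr0, div_eq_mul_inv]

theorem mfs_aliasing_error_bound_general
    (R ρ cs Cs Cv : ℝ) (hR : 1 < R) (hρ : 1 < ρ)
    (hcs : 0 < cs) (hcsCs : cs ≤ Cs) (hCv : 0 < Cv)
    (s v : ℤ → ℂ)
    (hs0 : s 0 ≠ 0)
    (hsl : ∀ m : ℤ, m ≠ 0 → cs / |(m : ℝ)| * R ^ (-|m|) ≤ ‖s m‖)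
    (hsu : ∀ m : ℤ, m ≠ 0 → ‖s m‖ ≤ Cs / |(m : ℝ)| * R ^ (-|m|))
    (hv : ∀ m : ℤ, ‖v m‖ ≤ Cv * ρ ^ (-|m|)) :
    ∃ C : ℝ, 0 < C ∧ ∀ N : ℕ, Even N → 2 ≤ N →
      ∑' m : {m : ℤ // m ∉ window N},
          (‖((N : ℂ) / (2 * (Real.pi : ℂ))) * s (m : ℤ) *
              ((2 * (Real.pi : ℂ)) / (N : ℂ) * v (winRep N (m : ℤ)) / s (winRep N (m : ℤ)))‖₊
            : ℝ≥0∞) ^ 2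
        ≤ ENNReal.ofReal
            (C * R ^ (-2 * (N : ℤ)) * ∑ n ∈ window N, (R ^ 2 / ρ) ^ (2 * |n|)) := by
  have hCs : 0 < Cs := hcs.trans_le hcsCs
  set A := Cs * Cv / min cs ‖s 0‖
  have hA : 0 < A := by have := norm_pos_iff.2 hs0; positivity
  have hR2 : R ^ (-2 : ℤ) < 1 := zpow_lt_one_of_neg₀ hR (by norm_num)
  refine ⟨2 * A ^ 2 / (1 - R ^ (-2 : ℤ)), by have := sub_pos.2 hR2; positivity, fun N hN hN2 => ?_⟩
  set r := R ^ (-2 * (N : ℤ))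
  have hr0 : 0 ≤ r := by positivity
  have hr : r ≤ R ^ (-2 : ℤ) := zpow_le_zpow_right₀ hR.le (by omega)
  calc ∑' m : {m : ℤ // m ∉ window N}, aliasingTerm N s v m
      ≤ (∑ k ∈ window N, ENNReal.ofReal (A ^ 2 * (R ^ 2 / ρ) ^ (2 * |k|))) *
          (2 * (ENNReal.ofReal r * (1 - ENNReal.ofReal r)⁻¹)) :=
        tsum_compl_window_le hN (by omega) _ _ _ fun k hk j hj =>
          aliasingTerm_add_mul_le hR (zero_lt_one.trans hρ) hcs hCs.le hCv.le hs0 hsl hsu hv hN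
            (by omega) hk hj
    _ = ENNReal.ofReal (2 * A ^ 2 * (r / (1 - r)) * ∑ k ∈ window N, (R ^ 2 / ρ) ^ (2 * |k|)) := by
        rw [ofReal_mul_inv_one_sub_ofReal hr0 (hr.trans_lt hR2), ← ENNReal.ofReal_sum_of_nonneg
          (fun k _ => by positivity), ← ENNReal.ofReal_ofNat 2, ← ENNReal.ofReal_mul (by norm_num),
          ← ENNReal.ofReal_mul (by positivity), ← Finset.mul_sum]
        congr 1
        ring
    _ ≤ ENNReal.ofReal (2 * A ^ 2 / (1 - R ^ (-2 : ℤ)) * r *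
          ∑ n ∈ window N, (R ^ 2 / ρ) ^ (2 * |n|)) := by
        refine ENNReal.ofReal_le_ofReal ?_
        rw [mul_div_assoc', mul_div_right_comm]
        gcongr

/-- Bound on the aliasing error `E_u²` for the window-interpolating coefficients
`α̂_m = (2π/N)·v̂(m)/ŝ(m)`:
`E_u² ≤ C·R^{-2N}·∑_{−N/2<n≤N/2} (R²/ρ)^{2|n|}` with `C` independent of `N`. -/
theorem mfs_aliasing_error_bound
    (R ρ cs Cs Cv : ℝ) (hR : 1 < R) (hρ : 1 < ρ)
    (hcs : 0 < cs) (hcsCs : cs ≤ Cs) (hCv : 0 < Cv)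
    (s v : ℤ → ℂ)
    (hs0 : s 0 ≠ 0) (hs0' : ‖s 0‖ ≤ Cs)
    (hsl : ∀ m : ℤ, m ≠ 0 → cs / |(m : ℝ)| * R ^ (-|m|) ≤ ‖s m‖)
    (hsu : ∀ m : ℤ, m ≠ 0 → ‖s m‖ ≤ Cs / |(m : ℝ)| * R ^ (-|m|))
    (hv : ∀ m : ℤ, ‖v m‖ ≤ Cv * ρ ^ (-|m|)) :
    ∃ C : ℝ, 0 < C ∧ ∀ N : ℕ, Even N → 2 ≤ N →
      ∑' m : {m : ℤ // m ∉ window N},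
          (‖((N : ℂ) / (2 * (Real.pi : ℂ))) * s (m : ℤ) *
              ((2 * (Real.pi : ℂ)) / (N : ℂ) * v (winRep N (m : ℤ)) / s (winRep N (m : ℤ)))‖₊
            : ℝ≥0∞) ^ 2
        ≤ ENNReal.ofReal
            (C * R ^ (-2 * (N : ℤ)) * ∑ n ∈ window N, (R ^ 2 / ρ) ^ (2 * |n|)) :=
  mfs_aliasing_error_bound_general R ρ cs Cs Cv hR hρ hcs hcsCs hCv s v hs0 hsl hsu hv
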